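/- Let ε = 1 or ε = −1. For smooth τ : ℝ → ℝ define the vector field T(τ) on ℝ⁴ by T(τ)(x,y,t,u) = ( (1/3)τ′(t)x − (ε/6)τ″(t)y², (2/3)τ′(t)y, τ(t), −(2/3)τ′(t)u + (1/3)τ″(t)x − (ε/6)τ′″(t)y² ). Then for any smooth τ₁, τ₂ : ℝ → ℝ the Lie bracket satisfies [T(τ₁), T(τ₂)] = T(τ₁τ₂′ − τ₁′τ₂), i.e. the fields T(τ) realize a Virasoro algebra. -/

import Mathlib

/-- The Virasoro generator `T(τ)` of the KP symmetry algebra (equation (4.13) with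
`b = c₀ = c₁ = 0`), as a vector field on ℝ⁴ with coordinates `(x, y, t, u)`. -/
noncomputable def T (ε : ℝ) (τ : ℝ → ℝ) (p : ℝ × ℝ × ℝ × ℝ) : ℝ × ℝ × ℝ × ℝ :=
  (1 / 3 * deriv τ p.2.2.1 * p.1 - ε / 6 * deriv (deriv τ) p.2.2.1 * p.2.1 ^ 2,
   2 / 3 * deriv τ p.2.2.1 * p.2.1,
   τ p.2.2.1,
   -(2 / 3) * deriv τ p.2.2.1 * p.2.2.2 + 1 / 3 * deriv (deriv τ) p.2.2.1 * p.1
     - ε / 6 * deriv (deriv (deriv τ)) p.2.2.1 * p.2.1 ^ 2)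


open ContinuousLinearMap

private lemma cdd {f : ℝ → ℝ} (hf : ContDiff ℝ (⊤ : ℕ∞) f) : ContDiff ℝ (⊤ : ℕ∞) (deriv f) :=
  (contDiff_infty_iff_deriv.mp hf).2

private lemma fderiv_T_apply (ε : ℝ) {τ : ℝ → ℝ} (hτ : ContDiff ℝ (⊤ : ℕ∞) τ)
    (p v : ℝ × ℝ × ℝ × ℝ) :
    fderiv ℝ (T ε τ) p v =
      (1 / 3 * deriv τ p.2.2.1 * v.1 - ε / 3 * deriv (deriv τ) p.2.2.1 * p.2.1 * v.2.1
         + (1 / 3 * deriv (deriv τ) p.2.2.1 * p.1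
             - ε / 6 * deriv (deriv (deriv τ)) p.2.2.1 * p.2.1 ^ 2) * v.2.2.1,
       2 / 3 * deriv τ p.2.2.1 * v.2.1 + 2 / 3 * deriv (deriv τ) p.2.2.1 * p.2.1 * v.2.2.1,
       deriv τ p.2.2.1 * v.2.2.1,
       -(2 / 3) * deriv τ p.2.2.1 * v.2.2.2 + 1 / 3 * deriv (deriv τ) p.2.2.1 * v.1
         - ε / 3 * deriv (deriv (deriv τ)) p.2.2.1 * p.2.1 * v.2.1
         + (-(2 / 3) * deriv (deriv τ) p.2.2.1 * p.2.2.2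
             + 1 / 3 * deriv (deriv (deriv τ)) p.2.2.1 * p.1
             - ε / 6 * deriv (deriv (deriv (deriv τ))) p.2.2.1 * p.2.1 ^ 2) * v.2.2.1) := by
  have hx : HasFDerivAt (fun q : ℝ × ℝ × ℝ × ℝ => q.1) (fst ℝ ℝ (ℝ × ℝ × ℝ)) p :=
    hasFDerivAt_fst
  have hy : HasFDerivAt (fun q : ℝ × ℝ × ℝ × ℝ => q.2.1)
      ((fst ℝ ℝ (ℝ × ℝ)).comp (snd ℝ ℝ (ℝ × ℝ × ℝ))) p :=
    hasFDerivAt_fst.comp p hasFDerivAt_snd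
  have ht : HasFDerivAt (fun q : ℝ × ℝ × ℝ × ℝ => q.2.2.1)
      ((fst ℝ ℝ ℝ).comp ((snd ℝ ℝ (ℝ × ℝ)).comp (snd ℝ ℝ (ℝ × ℝ × ℝ)))) p :=
    hasFDerivAt_fst.comp p (hasFDerivAt_snd.comp p hasFDerivAt_snd)
  have hu : HasFDerivAt (fun q : ℝ × ℝ × ℝ × ℝ => q.2.2.2)
      ((snd ℝ ℝ ℝ).comp ((snd ℝ ℝ (ℝ × ℝ)).comp (snd ℝ ℝ (ℝ × ℝ × ℝ)))) p :=
    hasFDerivAt_snd.comp p (hasFDerivAt_snd.comp p hasFDerivAt_snd)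
  have hy2 : HasFDerivAt (fun q : ℝ × ℝ × ℝ × ℝ => q.2.1 ^ 2)
      ((((2 : ℕ) : ℝ) * p.2.1 ^ 1) • ((fst ℝ ℝ (ℝ × ℝ)).comp (snd ℝ ℝ (ℝ × ℝ × ℝ)))) p :=
    (hasDerivAt_pow 2 p.2.1).comp_hasFDerivAt (f := fun q : ℝ × ℝ × ℝ × ℝ => q.2.1) p hy
  have D0 : HasFDerivAt (fun q : ℝ × ℝ × ℝ × ℝ => τ q.2.2.1) _ p :=
    ((hτ.differentiable (by simp) p.2.2.1).hasDerivAt).comp_hasFDerivAt p ht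
  have D1 : HasFDerivAt (fun q : ℝ × ℝ × ℝ × ℝ => deriv τ q.2.2.1) _ p :=
    (((cdd hτ).differentiable (by simp) p.2.2.1).hasDerivAt).comp_hasFDerivAt (h₂ := deriv τ) p ht
  have D2 : HasFDerivAt (fun q : ℝ × ℝ × ℝ × ℝ => deriv (deriv τ) q.2.2.1) _ p :=
    (((cdd (cdd hτ)).differentiable (by simp) p.2.2.1).hasDerivAt).comp_hasFDerivAt (h₂ := deriv (deriv τ)) p ht
  have D3 : HasFDerivAt (fun q : ℝ × ℝ × ℝ × ℝ => deriv (deriv (deriv τ)) q.2.2.1) _ p :=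
    (((cdd (cdd (cdd hτ))).differentiable (by simp) p.2.2.1).hasDerivAt).comp_hasFDerivAt (h₂ := deriv (deriv (deriv τ))) p ht
  have hT : HasFDerivAt (T ε τ) _ p :=
    (((D1.const_mul (1 / 3)).fun_mul hx).fun_sub ((D2.const_mul (ε / 6)).fun_mul hy2)).prodMk
      ((((D1.const_mul (2 / 3)).fun_mul hy)).prodMk
        (D0.prodMk ((((D1.const_mul (-(2 / 3))).fun_mul hu).fun_add
          ((D2.const_mul (1 / 3)).fun_mul hx)).fun_sub ((D3.const_mul (ε / 6)).fun_mul hy2))))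
  rw [hT.fderiv]
  simp only [ContinuousLinearMap.prod_apply, ContinuousLinearMap.add_apply,
    ContinuousLinearMap.sub_apply, ContinuousLinearMap.smul_apply,
    ContinuousLinearMap.coe_comp', Function.comp_apply, ContinuousLinearMap.coe_fst',
    ContinuousLinearMap.coe_snd', smul_eq_mul, Prod.mk.injEq]
  refine ⟨by ring, by ring, trivial, by ring⟩

/-- the fields `T(τ)` realize a Virasoro algebra:
`[T(τ₁), T(τ₂)] = T(τ₁τ₂′ − τ₁′τ₂)`. -/
theorem stmt5 (ε : ℝ) (hε : ε = 1 ∨ ε = -1)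
    (τ₁ τ₂ : ℝ → ℝ) (hτ₁ : ContDiff ℝ (⊤ : ℕ∞) τ₁) (hτ₂ : ContDiff ℝ (⊤ : ℕ∞) τ₂) :
    ∀ p : ℝ × ℝ × ℝ × ℝ,
      VectorField.lieBracket ℝ (T ε τ₁) (T ε τ₂) p
        = T ε (fun t => τ₁ t * deriv τ₂ t - deriv τ₁ t * τ₂ t) p := by
  intro p
  have d1 : Differentiable ℝ τ₁ := hτ₁.differentiable (by simp)
  have d1' : Differentiable ℝ (deriv τ₁) := (cdd hτ₁).differentiable (by simp)
  have d1'' : Differentiable ℝ (deriv (deriv τ₁)) := (cdd (cdd hτ₁)).differentiable (by simp)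
  have d1''' : Differentiable ℝ (deriv (deriv (deriv τ₁))) :=
    (cdd (cdd (cdd hτ₁))).differentiable (by simp)
  have d2 : Differentiable ℝ τ₂ := hτ₂.differentiable (by simp)
  have d2' : Differentiable ℝ (deriv τ₂) := (cdd hτ₂).differentiable (by simp)
  have d2'' : Differentiable ℝ (deriv (deriv τ₂)) := (cdd (cdd hτ₂)).differentiable (by simp)
  have d2''' : Differentiable ℝ (deriv (deriv (deriv τ₂))) :=
    (cdd (cdd (cdd hτ₂))).differentiable (by simp)
  set σ : ℝ → ℝ := fun t => τ₁ t * deriv τ₂ t - deriv τ₁ t * τ₂ t with hσ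
  have hσ1 : deriv σ = fun s => τ₁ s * deriv (deriv τ₂) s - deriv (deriv τ₁) s * τ₂ s := by
    funext s
    rw [hσ]
    rw [deriv_fun_sub ((d1 s).fun_mul (d2' s)) ((d1' s).fun_mul (d2 s)),
      deriv_fun_mul (d1 s) (d2' s), deriv_fun_mul (d1' s) (d2 s)]
    ring
  have hσ2 : deriv (deriv σ) = fun s =>
      τ₁ s * deriv (deriv (deriv τ₂)) s + deriv τ₁ s * deriv (deriv τ₂) s
        - deriv (deriv τ₁) s * deriv τ₂ s - deriv (deriv (deriv τ₁)) s * τ₂ s := by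
    funext s
    rw [hσ1]
    rw [deriv_fun_sub ((d1 s).fun_mul (d2'' s)) ((d1'' s).fun_mul (d2 s)),
      deriv_fun_mul (d1 s) (d2'' s), deriv_fun_mul (d1'' s) (d2 s)]
    ring
  have hσ3 : deriv (deriv (deriv σ)) p.2.2.1 =
      τ₁ p.2.2.1 * deriv (deriv (deriv (deriv τ₂))) p.2.2.1
        + 2 * deriv τ₁ p.2.2.1 * deriv (deriv (deriv τ₂)) p.2.2.1
        - 2 * deriv (deriv (deriv τ₁)) p.2.2.1 * deriv τ₂ p.2.2.1
        - deriv (deriv (deriv (deriv τ₁))) p.2.2.1 * τ₂ p.2.2.1 := by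
    rw [hσ2]
    rw [deriv_fun_sub (((((d1 p.2.2.1).fun_mul (d2''' p.2.2.1)).fun_add
          ((d1' p.2.2.1).fun_mul (d2'' p.2.2.1))).fun_sub ((d1'' p.2.2.1).fun_mul (d2' p.2.2.1))))
        ((d1''' p.2.2.1).fun_mul (d2 p.2.2.1)),
      deriv_fun_sub (((d1 p.2.2.1).fun_mul (d2''' p.2.2.1)).fun_add ((d1' p.2.2.1).fun_mul (d2'' p.2.2.1)))
        ((d1'' p.2.2.1).fun_mul (d2' p.2.2.1)),
      deriv_fun_add ((d1 p.2.2.1).fun_mul (d2''' p.2.2.1)) ((d1' p.2.2.1).fun_mul (d2'' p.2.2.1)),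
      deriv_fun_mul (d1 p.2.2.1) (d2''' p.2.2.1), deriv_fun_mul (d1' p.2.2.1) (d2'' p.2.2.1),
      deriv_fun_mul (d1'' p.2.2.1) (d2' p.2.2.1), deriv_fun_mul (d1''' p.2.2.1) (d2 p.2.2.1)]
    ring
  rw [VectorField.lieBracket]
  rw [fderiv_T_apply ε hτ₂ p (T ε τ₁ p), fderiv_T_apply ε hτ₁ p (T ε τ₂ p)]
  simp only [T, Prod.mk_sub_mk, Prod.mk.injEq]
  rw [hσ3, hσ2, hσ1]
  simp only [hσ]
  refine ⟨by ring, by ring, by ring, by ring⟩
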